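/- Let ω³ be the standard G₂ 3-form on ℝ⁷ and T_β the 3-form defined for β ∈ ℝ⁷ by T_β(X,Y,Z) := (3/8)(pr_m(β∧Y)(X,Z) − pr_m(β∧X)(Y,Z)) + (1/8)(g(β,Y)g(X,Z) − g(β,X)g(Y,Z)), where pr_m is the orthogonal projection of Λ²(ℝ⁷) onto Λ²₇ = {V ⌟ ω³ : V ∈ ℝ⁷}. Then T_β = −(1/4)(β ⌟ *ω³). -/
import Mathlib


noncomputable section
open scoped BigOperators RealInnerProductSpace

/-- Kronecker delta on `Fin 7`. -/
def kd (a b : Fin 7) : ℝ := if a = b then 1 else 0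

/-- Components of the 3-form `e_a ∧ e_b ∧ e_c` on `ℝ⁷`. -/
def trip (a b c : Fin 7) : Fin 7 → Fin 7 → Fin 7 → ℝ := fun i j k =>
  Matrix.det !![kd a i, kd a j, kd a k; kd b i, kd b j, kd b k; kd c i, kd c j, kd c k]

/-- Components of the 4-form `e_a ∧ e_b ∧ e_c ∧ e_d` on `ℝ⁷`. -/
def quad (a b c d : Fin 7) : Fin 7 → Fin 7 → Fin 7 → Fin 7 → ℝ := fun i j k l =>
  Matrix.det !![kd a i, kd a j, kd a k, kd a l;
                kd b i, kd b j, kd b k, kd b l;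
                kd c i, kd c j, kd c k, kd c l;
                kd d i, kd d j, kd d k, kd d l]

/-- The standard G₂ 3-form
`ω³ = e₁₂₇ + e₁₃₅ − e₁₄₆ − e₂₃₆ − e₂₄₅ + e₃₄₇ + e₅₆₇` (components, 0-indexed). -/
def w3 : Fin 7 → Fin 7 → Fin 7 → ℝ := fun i j k =>
  trip 0 1 6 i j k + trip 0 2 4 i j k - trip 0 3 5 i j k - trip 1 2 5 i j k
    - trip 1 3 4 i j k + trip 2 3 6 i j k + trip 4 5 6 i j k

/-- Levi-Civita symbol on seven indices. -/
def eps (f : Fin 7 → Fin 7) : ℝ :=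
  ∏ p : Fin 7 × Fin 7,
    if p.1 < p.2 then ((Int.sign ((f p.2 : ℤ) - (f p.1 : ℤ)) : ℤ) : ℝ) else 1

/-- Hodge star of a 3-form on oriented Euclidean `ℝ⁷` (components). -/
def star3 (T : Fin 7 → Fin 7 → Fin 7 → ℝ) : Fin 7 → Fin 7 → Fin 7 → Fin 7 → ℝ :=
  fun j₁ j₂ j₃ j₄ =>
    (1 / 6) * ∑ i₁, ∑ i₂, ∑ i₃, T i₁ i₂ i₃ * eps ![i₁, i₂, i₃, j₁, j₂, j₃, j₄]

/-- Hodge star of a 4-form on oriented Euclidean `ℝ⁷` (components). -/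
def star4 (A : Fin 7 → Fin 7 → Fin 7 → Fin 7 → ℝ) : Fin 7 → Fin 7 → Fin 7 → ℝ :=
  fun j₁ j₂ j₃ =>
    (1 / 24) * ∑ i₁, ∑ i₂, ∑ i₃, ∑ i₄, A i₁ i₂ i₃ i₄ * eps ![i₁, i₂, i₃, i₄, j₁, j₂, j₃]

/-- Hodge star of a 5-form on oriented Euclidean `ℝ⁷` (components). -/
def star5 (A : Fin 7 → Fin 7 → Fin 7 → Fin 7 → Fin 7 → ℝ) : Fin 7 → Fin 7 → ℝ :=
  fun j₁ j₂ =>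
    (1 / 120) * ∑ i₁, ∑ i₂, ∑ i₃, ∑ i₄, ∑ i₅,
      A i₁ i₂ i₃ i₄ i₅ * eps ![i₁, i₂, i₃, i₄, i₅, j₁, j₂]

/-- Inner product of 2-forms for which the `e_i ∧ e_j` (i<j) are orthonormal. -/
def ip2 (α β : Fin 7 → Fin 7 → ℝ) : ℝ := (1 / 2) * ∑ a, ∑ b, α a b * β a b

/-- Wedge product of two 1-forms (components). -/
def wedge11 (α β : Fin 7 → ℝ) : Fin 7 → Fin 7 → ℝ := fun a b => α a * β b - α b * β a

/-- Wedge product of a 1-form with a 3-form (components). -/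
def wedge13 (α : Fin 7 → ℝ) (ω : Fin 7 → Fin 7 → Fin 7 → ℝ) :
    Fin 7 → Fin 7 → Fin 7 → Fin 7 → ℝ := fun a b c d =>
  α a * ω b c d - α b * ω a c d + α c * ω a b d - α d * ω a b c

/-- Wedge product of two 2-forms (components). -/
def wedge22 (α β : Fin 7 → Fin 7 → ℝ) : Fin 7 → Fin 7 → Fin 7 → Fin 7 → ℝ :=
  fun a b c d =>
    α a b * β c d - α a c * β b d + α a d * β b c
      + β a b * α c d - β a c * α b d + β a d * α b c

/-- Wedge product of a 3-form with a 2-form (components). -/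
def wedge32 (ω : Fin 7 → Fin 7 → Fin 7 → ℝ) (α : Fin 7 → Fin 7 → ℝ) :
    Fin 7 → Fin 7 → Fin 7 → Fin 7 → Fin 7 → ℝ := fun a b c d e =>
  ω a b c * α d e - ω a b d * α c e + ω a b e * α c d + ω a c d * α b e
    - ω a c e * α b d + ω a d e * α b c - ω b c d * α a e + ω b c e * α a d
    - ω b d e * α a c + ω c d e * α a b

/-- Interior product of a vector with a 4-form (components). -/
def contr1 (X : Fin 7 → ℝ) (A : Fin 7 → Fin 7 → Fin 7 → Fin 7 → ℝ) :
    Fin 7 → Fin 7 → Fin 7 → ℝ := fun a b c => ∑ i, X i * A i a b c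

/-- Interior product of a vector with a 3-form (components). -/
def contr13 (X : Fin 7 → ℝ) (T : Fin 7 → Fin 7 → Fin 7 → ℝ) : Fin 7 → Fin 7 → ℝ :=
  fun a b => ∑ i, X i * T i a b

/-- The orthogonal projection of a 2-form onto `Λ²₇ = {X ⌟ ω³}`:
`pr_m(α) = (1/3) Σᵢ (α, eᵢ ⌟ ω³) (eᵢ ⌟ ω³)`. -/
def prm (α : Fin 7 → Fin 7 → ℝ) : Fin 7 → Fin 7 → ℝ := fun a b =>
  (1 / 3) * ∑ i, ip2 α (fun x y => w3 i x y) * w3 i a b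

/-! ### Integer mirrors -/

def kdZ (a b : Fin 7) : ℤ := if a = b then 1 else 0

def tripZ (a b c : Fin 7) (i j k : Fin 7) : ℤ :=
  kdZ a i * (kdZ b j * kdZ c k - kdZ b k * kdZ c j)
  - kdZ a j * (kdZ b i * kdZ c k - kdZ b k * kdZ c i)
  + kdZ a k * (kdZ b i * kdZ c j - kdZ b j * kdZ c i)

def w3Z (i j k : Fin 7) : ℤ :=
  tripZ 0 1 6 i j k + tripZ 0 2 4 i j k - tripZ 0 3 5 i j k - tripZ 1 2 5 i j k
    - tripZ 1 3 4 i j k + tripZ 2 3 6 i j k + tripZ 4 5 6 i j k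

def quadZ (a b c d : Fin 7) (i j k l : Fin 7) : ℤ :=
  kdZ a i * tripZ b c d j k l - kdZ a j * tripZ b c d i k l
  + kdZ a k * tripZ b c d i j l - kdZ a l * tripZ b c d i j k

def psiZ (p q r s : Fin 7) : ℤ :=
  quadZ 0 1 2 3 p q r s + quadZ 0 1 4 5 p q r s + quadZ 0 2 5 6 p q r s
  + quadZ 0 3 4 6 p q r s + quadZ 1 2 4 6 p q r s - quadZ 1 3 5 6 p q r s
  + quadZ 2 3 4 5 p q r s

def sg (a b : Fin 7) : ℤ := Int.sign ((b : ℤ) - (a : ℤ))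

def epsL (x1 x2 x3 x4 x5 x6 x7 : Fin 7) : ℤ :=
  sg x1 x2 * sg x1 x3 * sg x1 x4 * sg x1 x5 * sg x1 x6 * sg x1 x7
  * sg x2 x3 * sg x2 x4 * sg x2 x5 * sg x2 x6 * sg x2 x7
  * sg x3 x4 * sg x3 x5 * sg x3 x6 * sg x3 x7
  * sg x4 x5 * sg x4 x6 * sg x4 x7
  * sg x5 x6 * sg x5 x7
  * sg x6 x7

/-! ### Cast lemmas -/

lemma kd_cast (a b : Fin 7) : kd a b = ((kdZ a b : ℤ) : ℝ) := by
  unfold kd kdZ; split <;> simp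

set_option maxHeartbeats 1000000 in
lemma w3_cast (i j k : Fin 7) : w3 i j k = ((w3Z i j k : ℤ) : ℝ) := by
  simp only [w3, w3Z, trip, tripZ, Matrix.det_fin_three, Matrix.of_apply, Matrix.cons_val',
    Matrix.cons_val_zero, Matrix.cons_val_one, Matrix.head_cons, Matrix.empty_val',
    Matrix.cons_val_fin_one, Matrix.head_fin_const, Matrix.cons_val_two, Matrix.tail_cons,
    kd_cast]
  push_cast
  ring

set_option maxHeartbeats 2000000 in
set_option maxRecDepth 10000 in
lemma eps_eq (f : Fin 7 → Fin 7) : eps f =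
    ((sg (f 0) (f 1) * sg (f 0) (f 2) * sg (f 0) (f 3) * sg (f 0) (f 4) * sg (f 0) (f 5) * sg (f 0) (f 6)
    * sg (f 1) (f 2) * sg (f 1) (f 3) * sg (f 1) (f 4) * sg (f 1) (f 5) * sg (f 1) (f 6)
    * sg (f 2) (f 3) * sg (f 2) (f 4) * sg (f 2) (f 5) * sg (f 2) (f 6)
    * sg (f 3) (f 4) * sg (f 3) (f 5) * sg (f 3) (f 6)
    * sg (f 4) (f 5) * sg (f 4) (f 6)
    * sg (f 5) (f 6) : ℤ) : ℝ) := by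
  rw [eps, Fintype.prod_prod_type]
  simp only [Fin.prod_univ_seven, Fin.reduceLT, reduceIte]
  push_cast [sg]
  ring

lemma eps_mat (x1 x2 x3 x4 x5 x6 x7 : Fin 7) :
    eps ![x1, x2, x3, x4, x5, x6, x7] = ((epsL x1 x2 x3 x4 x5 x6 x7 : ℤ) : ℝ) := by
  rw [eps_eq]
  rfl

lemma sg_swap (a b : Fin 7) : sg b a = - sg a b := by
  unfold sg
  rw [show ((a : ℤ) - (b : ℤ)) = -((b : ℤ) - (a : ℤ)) by ring, Int.sign_neg]

lemma epsL_swap12 (a b c j1 j2 j3 j4 : Fin 7) :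
    epsL a b c j1 j2 j3 j4 = - epsL b a c j1 j2 j3 j4 := by
  unfold epsL
  rw [sg_swap a b]
  ring

lemma epsL_swap23 (a b c j1 j2 j3 j4 : Fin 7) :
    epsL a b c j1 j2 j3 j4 = - epsL a c b j1 j2 j3 j4 := by
  unfold epsL
  rw [sg_swap b c]
  ring

/-! ### Decidable integer facts -/

set_option maxHeartbeats 2000000 in
theorem F1 : ∀ p q r s : Fin 7,
    w3Z 0 p q * w3Z 0 r s + w3Z 1 p q * w3Z 1 r s + w3Z 2 p q * w3Z 2 r s
    + w3Z 3 p q * w3Z 3 r s + w3Z 4 p q * w3Z 4 r s + w3Z 5 p q * w3Z 5 r s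
    + w3Z 6 p q * w3Z 6 r s
    = kdZ p r * kdZ q s - kdZ p s * kdZ q r + psiZ p q r s := by decide

set_option maxHeartbeats 4000000 in
set_option maxRecDepth 100000 in
theorem F2 : ∀ j1 j2 j3 j4 : Fin 7,
    epsL 0 1 6 j1 j2 j3 j4 + epsL 0 2 4 j1 j2 j3 j4 - epsL 0 3 5 j1 j2 j3 j4
    - epsL 1 2 5 j1 j2 j3 j4 - epsL 1 3 4 j1 j2 j3 j4 + epsL 2 3 6 j1 j2 j3 j4
    + epsL 4 5 6 j1 j2 j3 j4 = psiZ j1 j2 j3 j4 := by decide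

set_option maxHeartbeats 2000000 in
theorem F3 : ∀ p q r s : Fin 7, psiZ p r q s = - psiZ p q r s := by decide

/-! ### Symbolic lemmas -/

lemma trip_contract (a b c : Fin 7) (F : Fin 7 → Fin 7 → Fin 7 → ℝ) :
    (∑ i1, ∑ i2, ∑ i3, trip a b c i1 i2 i3 * F i1 i2 i3)
      = F a b c - F a c b - F b a c + F b c a + F c a b - F c b a := by
  simp [trip, Matrix.det_fin_three, kd, sub_mul, add_mul, mul_sub, mul_add,
    ite_mul, mul_ite, mul_zero, zero_mul, one_mul, mul_one,
    Finset.sum_add_distrib, Finset.sum_sub_distrib, Finset.sum_ite_eq, Finset.mem_univ]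
  ring

lemma six (a b c j1 j2 j3 j4 : Fin 7) :
    eps ![a, b, c, j1, j2, j3, j4] - eps ![a, c, b, j1, j2, j3, j4]
    - eps ![b, a, c, j1, j2, j3, j4] + eps ![b, c, a, j1, j2, j3, j4]
    + eps ![c, a, b, j1, j2, j3, j4] - eps ![c, b, a, j1, j2, j3, j4]
    = 6 * ((epsL a b c j1 j2 j3 j4 : ℤ) : ℝ) := by
  rw [eps_mat, eps_mat, eps_mat, eps_mat, eps_mat, eps_mat]
  have h1 : epsL a c b j1 j2 j3 j4 = - epsL a b c j1 j2 j3 j4 := by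
    rw [epsL_swap23 a b c]; ring
  have h2 : epsL b a c j1 j2 j3 j4 = - epsL a b c j1 j2 j3 j4 := by
    rw [epsL_swap12 a b c]; ring
  have h3 : epsL b c a j1 j2 j3 j4 = epsL a b c j1 j2 j3 j4 := by
    rw [epsL_swap12 b c a, epsL_swap23 c b a, epsL_swap12 c a b, epsL_swap23 a b c]; ring
  have h4 : epsL c a b j1 j2 j3 j4 = epsL a b c j1 j2 j3 j4 := by
    rw [epsL_swap12 c a b, epsL_swap23 a c b]; ring
  have h5 : epsL c b a j1 j2 j3 j4 = - epsL a b c j1 j2 j3 j4 := by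
    rw [epsL_swap23 c b a, h4]
  rw [h1, h2, h3, h4, h5]
  push_cast
  ring

lemma star3_w3 (j1 j2 j3 j4 : Fin 7) :
    star3 w3 j1 j2 j3 j4 = ((psiZ j1 j2 j3 j4 : ℤ) : ℝ) := by
  unfold star3
  simp only [w3, add_mul, sub_mul, Finset.sum_add_distrib, Finset.sum_sub_distrib]
  rw [trip_contract 0 1 6, trip_contract 0 2 4, trip_contract 0 3 5,
    trip_contract 1 2 5, trip_contract 1 3 4, trip_contract 2 3 6,
    trip_contract 4 5 6]
  rw [six 0 1 6, six 0 2 4, six 0 3 5, six 1 2 5, six 1 3 4, six 2 3 6, six 4 5 6]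
  have h := congrArg (fun z : ℤ => (z : ℝ)) (F2 j1 j2 j3 j4)
  push_cast at h
  linear_combination h

lemma w3_anti (i x y : Fin 7) : w3 i y x = - w3 i x y := by
  simp [w3, trip, Matrix.det_fin_three]
  ring

lemma F1R (p q r s : Fin 7) :
    (∑ i, w3 i p q * w3 i r s)
      = kd p r * kd q s - kd p s * kd q r + ((psiZ p q r s : ℤ) : ℝ) := by
  rw [Fin.sum_univ_seven]
  simp only [w3_cast, kd_cast]
  exact_mod_cast congrArg (fun z : ℤ => (z : ℝ)) (F1 p q r s)

lemma ip2w (β : Fin 7 → ℝ) (i e : Fin 7) :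
    ip2 (wedge11 β (kd e)) (fun x y => w3 i x y) = ∑ x, β x * w3 i x e := by
  unfold ip2 wedge11
  have h1 : ∀ x : Fin 7, (∑ y, (β x * kd e y - β y * kd e x) * w3 i x y)
      = β x * w3 i x e - kd e x * ∑ y, β y * w3 i x y := by
    intro x
    simp only [sub_mul, Finset.sum_sub_distrib]
    congr 1
    · simp [kd, mul_ite, ite_mul, mul_zero, zero_mul, mul_one, Finset.sum_ite_eq,
        Finset.mem_univ, mul_comm, mul_assoc]
    · rw [Finset.mul_sum]
      exact Finset.sum_congr rfl fun y _ => by ring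
  rw [Finset.sum_congr rfl fun x _ => h1 x, Finset.sum_sub_distrib]
  have h2 : (∑ x, kd e x * ∑ y, β y * w3 i x y) = ∑ y, β y * w3 i e y := by
    simp [kd, ite_mul, zero_mul, one_mul, Finset.sum_ite_eq, Finset.mem_univ]
  rw [h2]
  have h3 : (∑ y, β y * w3 i e y) = - ∑ x, β x * w3 i x e := by
    rw [← Finset.sum_neg_distrib]
    exact Finset.sum_congr rfl fun y _ => by rw [w3_anti]; ring
  rw [h3]
  ring

lemma prm_eq2 (β : Fin 7 → ℝ) (e d f : Fin 7) :
    prm (wedge11 β (kd e)) d f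
      = ∑ x, β x * ((1 / 3) * (kd x d * kd e f - kd x f * kd e d + ((psiZ x e d f : ℤ) : ℝ))) := by
  unfold prm
  rw [show (∑ i, ip2 (wedge11 β (kd e)) (fun x y => w3 i x y) * w3 i d f)
      = ∑ i, ∑ x, β x * (w3 i x e * w3 i d f) from
    Finset.sum_congr rfl fun i _ => by
      rw [ip2w, Finset.sum_mul]
      exact Finset.sum_congr rfl fun x _ => by ring]
  rw [Finset.sum_comm, Finset.mul_sum]
  refine Finset.sum_congr rfl fun x _ => ?_
  rw [show (∑ i, β x * (w3 i x e * w3 i d f)) = β x * ∑ i, w3 i x e * w3 i d f by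
    rw [Finset.mul_sum], F1R]
  ring

lemma kd_symm (a b : Fin 7) : kd b a = kd a b := by
  unfold kd; simp [eq_comm]

lemma pick (β : Fin 7 → ℝ) (e : Fin 7) : (∑ x, β x * kd x e) = β e := by
  simp [kd, mul_ite, mul_one, mul_zero, Finset.sum_ite_eq', Finset.mem_univ]

/-- The 3-form
`T_β(X,Y,Z) = (3/8)(pr_m(β∧Y)(X,Z) − pr_m(β∧X)(Y,Z)) + (1/8)(g(β,Y)g(X,Z) − g(β,X)g(Y,Z))`
equals `−(1/4)(β ⌟ *ω³)` (evaluated on the standard basis vectors `e_a, e_b, e_c`). -/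
theorem stmt_19 (β : Fin 7 → ℝ) :
    ∀ a b c : Fin 7,
      (3 / 8) * (prm (wedge11 β (kd b)) a c - prm (wedge11 β (kd a)) b c)
          + (1 / 8) * (β b * kd a c - β a * kd b c)
        = -(1 / 4) * contr1 β (star3 w3) a b c := by
  intro a b c
  have hcontr : contr1 β (star3 w3) a b c = ∑ x, β x * ((psiZ x a b c : ℤ) : ℝ) := by
    unfold contr1
    exact Finset.sum_congr rfl fun x _ => by rw [star3_w3]
  rw [hcontr, prm_eq2 β b a c, prm_eq2 β a b c, ← pick β b, ← pick β a]
  rw [Finset.sum_mul, Finset.sum_mul, ← Finset.sum_sub_distrib, ← Finset.sum_sub_distrib,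
    Finset.mul_sum, Finset.mul_sum, Finset.mul_sum, ← Finset.sum_add_distrib]
  refine Finset.sum_congr rfl fun x _ => ?_
  have h := congrArg (fun z : ℤ => (z : ℝ)) (F3 x a b c)
  push_cast at h
  rw [h, kd_symm b a]
  ring
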